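/- arXiv:2206.04956 — 2 statements merged into one kernel-verified Lean document; each statement's English description precedes it below -/
import Mathlib

section
/- Let d = 3, s = −1, γ ≥ 1, and V := γ|·| (that is, α = 1). Then δ_0, the Dirac unit point mass at the origin of ℝ^3, is the unique minimizer of I_{−1,V} over all Borel probability measures on ℝ^3: I_{−1,V}(δ_0) = 0 and for every Borel probability measure ν ≠ δ_0 one has I_{−1,V}(ν) > 0. -/
open MeasureTheory Real
open scoped ENNReal

noncomputable section

/-- Euclidean space `ℝ^d`. -/
abbrev Esp (d : ℕ) := EuclideanSpace ℝ (Fin d)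

open Classical in
/-- Riesz kernel with values in the extended reals: `K_s(x) = |x|^(-s)` for `s > 0`,
`-|x|^(-s)` for `-2 < s < 0`, `-log |x|` for `s = 0`, with conventions `K_s(0) = +∞`
for `s ≥ 0` and `K_s(0) = 0` for `s < 0`. -/
def rieszK (d : ℕ) (s : ℝ) (x : Esp d) : EReal :=
  if x = 0 then (if 0 ≤ s then (⊤ : EReal) else (0 : EReal))
  else if 0 < s then ((‖x‖ ^ (-s) : ℝ) : EReal)
  else if s = 0 then ((-Real.log ‖x‖ : ℝ) : EReal)
  else ((-(‖x‖ ^ (-s)) : ℝ) : EReal)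

open Classical in
/-- Positive part of an extended real, as an extended nonnegative real. -/
def erealPos (x : EReal) : ℝ≥0∞ := if x = ⊤ then ⊤ else ENNReal.ofReal x.toReal

/-- Energy `I_{s,V}(μ) = ∬ (K_s(x - y) + V x + V y) dμ(x) dμ(y) ∈ [-∞, +∞]`, defined
as the difference of the lower integrals of the positive and negative parts of the
integrand. -/
def energy (d : ℕ) (s : ℝ) (V : Esp d → ℝ) (μ : Measure (Esp d)) : EReal :=
  ((∫⁻ p : Esp d × Esp d,
      erealPos (rieszK d s (p.1 - p.2) + (V p.1 : EReal) + (V p.2 : EReal))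
        ∂(μ.prod μ) : ℝ≥0∞) : EReal)
  - ((∫⁻ p : Esp d × Esp d,
      erealPos (-(rieszK d s (p.1 - p.2) + (V p.1 : EReal) + (V p.2 : EReal)))
        ∂(μ.prod μ) : ℝ≥0∞) : EReal)

/-- The uniform (rotation invariant) Borel probability measure on the centered sphere
of radius `R` in `ℝ^d`, realized as the pushforward of the normalized Lebesgue measure
on the unit ball by the radial projection `x ↦ (R/‖x‖) • x`. -/
def sphereUniform (d : ℕ) (R : ℝ) : Measure (Esp d) :=
  Measure.map (fun x => (R / ‖x‖) • x)
    ((volume (Metric.ball (0 : Esp d) 1))⁻¹ • volume.restrict (Metric.ball (0 : Esp d) 1))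

open Classical in
/-- Real-valued Riesz kernel (junk value `0` at the origin), used for potentials where
the singularity is negligible. -/
def rieszKr (d : ℕ) (s : ℝ) (x : Esp d) : ℝ :=
  if 0 < s then ‖x‖ ^ (-s)
  else if s = 0 then -Real.log ‖x‖
  else -(‖x‖ ^ (-s))

/-- Surface area `|S^(d-1)| = 2 π^(d/2) / Γ(d/2)` of the unit sphere in `ℝ^d`. -/
def surf (d : ℕ) : ℝ := 2 * Real.pi ^ ((d : ℝ) / 2) / Real.Gamma ((d : ℝ) / 2)

/-- The constant `τ_(d-1) = Γ(d/2) / (Γ(1/2) Γ((d-1)/2))` from the Funk-Hecke formula. -/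
def tau (d : ℕ) : ℝ :=
  Real.Gamma ((d : ℝ) / 2) / (Real.Gamma (1 / 2) * Real.Gamma (((d : ℝ) - 1) / 2))

/-- Rising factorial (Pochhammer symbol) `(x)_k = x (x+1) ⋯ (x+k-1)`. -/
def risingFact (x : ℝ) (k : ℕ) : ℝ := (ascPochhammer ℝ k).eval x

/-- Gauss hypergeometric function `₂F₁(a, b; c; z)` as a sum of its defining series. -/
def hyp2F1 (a b c z : ℝ) : ℝ :=
  ∑' k : ℕ, (risingFact a k * risingFact b k) / (risingFact c k * (k.factorial : ℝ)) * z ^ k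

/-- Laplacian on `ℝ^d`: sum of the second partial derivatives along the standard basis. -/
def lap (d : ℕ) (f : Esp d → ℝ) (x : Esp d) : ℝ :=
  ∑ i : Fin d,
    fderiv ℝ (fun y => fderiv ℝ f y (EuclideanSpace.single i 1)) x (EuclideanSpace.single i 1)

/-- Double factorial of an integer, with the convention `k‼ = 1` for `k ≤ 0`. -/
def dfact (k : ℤ) : ℝ := if k ≤ 0 then 1 else (Nat.doubleFactorial k.toNat : ℝ)

/-- The constant `C_(d,n) = (-1)^(n-1) (d-4)‼ (2n-2)‼ / (d-2n-2)‼`. -/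
def Cdn (d n : ℕ) : ℝ :=
  (-1 : ℝ) ^ (n - 1) * dfact ((d : ℤ) - 4) * dfact (2 * (n : ℤ) - 2) / dfact ((d : ℤ) - 2 * n - 2)

/-- The constant `c_d`: `2π` if `d = 2` and `(d-2) · 2 π^(d/2) / Γ(d/2)` otherwise. -/
def cd (d : ℕ) : ℝ :=
  if d = 2 then 2 * Real.pi
  else ((d : ℝ) - 2) * 2 * Real.pi ^ ((d : ℝ) / 2) / Real.Gamma ((d : ℝ) / 2)

/-!
For `s = -1` and `V = γ‖·‖` with `γ ≥ 1` the integrand `γ‖x‖ + γ‖y‖ - ‖x - y‖` is nonnegative by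
the triangle inequality, so the energy is the integral of a nonnegative function vanishing at
`(0, 0)`. If the energy of `ν` vanished, the integrand would vanish `ν ⊗ ν`-a.e., and by strict
convexity of the norm `x` and `-y` would then lie on a common ray for `ν ⊗ ν`-a.e. `(x, y)`.
Three nonzero points pairwise in this relation cannot exist, yet they can be found as soon as
`ν` charges `{0}ᶜ`, i.e. as soon as `ν ≠ δ₀`.
-/

section RayGeometry

variable {E : Type*}

theorem eq_zero_of_pairwise_sameRay_neg [AddCommGroup E] [Module ℝ E] {x y z : E}
    (hx : x ≠ 0) (hy : y ≠ 0) (hxy : SameRay ℝ x (-y)) (hxz : SameRay ℝ x (-z))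
    (hyz : SameRay ℝ y (-z)) : z = 0 := by
  have hyz' : SameRay ℝ y z := (hxy.symm.trans hxz fun h => (hx h).elim).of_neg
  exact eq_zero_of_sameRay_self_neg (hyz'.symm.trans hyz fun h => (hy h).elim)

theorem sameRay_neg_of_norm_add_le_norm_sub [NormedAddCommGroup E] [NormedSpace ℝ E]
    [StrictConvexSpace ℝ E] {x y : E} (h : ‖x‖ + ‖y‖ ≤ ‖x - y‖) : SameRay ℝ x (-y) := by
  rw [sameRay_iff_norm_add, norm_neg, ← sub_eq_add_neg]
  exact le_antisymm (norm_sub_le x y) h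

end RayGeometry

namespace MeasureTheory.Measure

variable {α : Type*} [MeasurableSpace α] {μ : Measure α}

theorem measure_compl_singleton_ne_zero_of_ne_dirac [MeasurableSingletonClass α]
    [IsProbabilityMeasure μ] {a : α} (h : μ ≠ dirac a) : μ {a}ᶜ ≠ 0 := by
  contrapose! h
  have hμa : μ {a} = 1 := (prob_compl_eq_zero_iff (measurableSet_singleton a)).mp h
  calc μ = μ.restrict {a} := (restrict_eq_self_of_ae_mem (mem_ae_iff.mpr h)).symm
    _ = dirac a := by rw [restrict_singleton, hμa, one_smul]

theorem exists_triple_of_ae_prod [SFinite μ] {R : α → α → Prop}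
    (hR : ∀ᵐ p ∂μ.prod μ, R p.1 p.2) {s : Set α} (hs : μ s ≠ 0) :
    ∃ x ∈ s, ∃ y ∈ s, ∃ z ∈ s, R x y ∧ R x z ∧ R y z := by
  have hR' : ∀ᵐ x ∂μ, ∀ᵐ y ∂μ, R x y := ae_ae_of_ae_prod hR
  obtain ⟨x, hx, hxR⟩ := exists_mem_of_measure_ne_zero_of_ae hs (ae_restrict_of_ae hR')
  obtain ⟨y, hy, hyR, hxy⟩ :=
    exists_mem_of_measure_ne_zero_of_ae hs (ae_restrict_of_ae (hR'.and hxR))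
  obtain ⟨z, hz, hxz, hyz⟩ :=
    exists_mem_of_measure_ne_zero_of_ae hs (ae_restrict_of_ae (hxR.and hyR))
  exact ⟨x, hx, y, hy, z, hz, hxy, hxz, hyz⟩

end MeasureTheory.Measure

theorem rieszK_neg_one (d : ℕ) (x : Esp d) : rieszK d (-1) x = ((-‖x‖ : ℝ) : EReal) := by
  by_cases hx : x = 0 <;> simp [rieszK, hx]

theorem erealPos_coe (r : ℝ) : erealPos r = ENNReal.ofReal r := by
  simp [erealPos]

theorem energy_neg_one_eq_lintegral {d : ℕ} {V : Esp d → ℝ} (hV : ∀ x y, ‖x - y‖ ≤ V x + V y)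
    (μ : Measure (Esp d)) :
    energy d (-1) V μ = ((∫⁻ p, ENNReal.ofReal (V p.1 + V p.2 - ‖p.1 - p.2‖) ∂μ.prod μ : ℝ≥0∞) :
      EReal) := by
  have hsum (p : Esp d × Esp d) : rieszK d (-1) (p.1 - p.2) + (V p.1 : EReal) + (V p.2 : EReal)
      = ((V p.1 + V p.2 - ‖p.1 - p.2‖ : ℝ) : EReal) := by
    rw [rieszK_neg_one, ← EReal.coe_add, ← EReal.coe_add]
    congr 1
    ring
  have hneg (p : Esp d × Esp d) :
      ENNReal.ofReal (-(V p.1 + V p.2 - ‖p.1 - p.2‖)) = 0 :=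
    ENNReal.ofReal_eq_zero.mpr (by linarith [hV p.1 p.2])
  simp only [energy, hsum, ← EReal.coe_neg, erealPos_coe, hneg, lintegral_zero,
    EReal.coe_ennreal_zero, sub_zero]

section NormPotential

variable {d : ℕ} {γ : ℝ}

theorem norm_sub_le_norm_potential (hγ : 1 ≤ γ) (x y : Esp d) :
    ‖x - y‖ ≤ γ * ‖x‖ + γ * ‖y‖ := by
  nlinarith [norm_sub_le x y, norm_nonneg x, norm_nonneg y]

theorem energy_neg_one_norm_dirac_zero (hγ : 1 ≤ γ) :
    energy d (-1) (fun x => γ * ‖x‖) (Measure.dirac 0) = 0 := by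
  rw [energy_neg_one_eq_lintegral (norm_sub_le_norm_potential hγ), Measure.dirac_prod_dirac,
    lintegral_dirac]
  simp

theorem energy_neg_one_norm_pos (hγ : 1 ≤ γ) {ν : Measure (Esp d)} [IsProbabilityMeasure ν]
    (hν : ν ≠ Measure.dirac 0) : 0 < energy d (-1) (fun x => γ * ‖x‖) ν := by
  rw [energy_neg_one_eq_lintegral (norm_sub_le_norm_potential hγ), EReal.coe_ennreal_pos,
    pos_iff_ne_zero]
  intro hzero
  have hmeas : AEMeasurable (fun p : Esp d × Esp d =>
      ENNReal.ofReal (γ * ‖p.1‖ + γ * ‖p.2‖ - ‖p.1 - p.2‖)) (ν.prod ν) := by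
    fun_prop
  have hray : ∀ᵐ p ∂ν.prod ν, SameRay ℝ p.1 (-p.2) := by
    filter_upwards [(lintegral_eq_zero_iff' hmeas).mp hzero] with p hp
    apply sameRay_neg_of_norm_add_le_norm_sub
    have := ENNReal.ofReal_eq_zero.mp hp
    nlinarith [norm_nonneg p.1, norm_nonneg p.2]
  obtain ⟨x, hx, y, hy, z, hz, hxy, hxz, hyz⟩ := Measure.exists_triple_of_ae_prod
    (R := fun x y => SameRay ℝ x (-y)) hray (Measure.measure_compl_singleton_ne_zero_of_ne_dirac hν)
  exact hz (eq_zero_of_pairwise_sameRay_neg hx hy hxy hxz hyz)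

end NormPotential

theorem statement3 (γ : ℝ) (hγ : 1 ≤ γ) :
    energy 3 (-1) (fun x => γ * ‖x‖) (Measure.dirac 0) = 0
    ∧ ∀ ν : Measure (Esp 3), IsProbabilityMeasure ν → ν ≠ Measure.dirac 0 →
        0 < energy 3 (-1) (fun x => γ * ‖x‖) ν :=
  ⟨energy_neg_one_norm_dirac_zero hγ, fun _ _ hν => energy_neg_one_norm_pos hγ hν⟩

end
end

section
/- Let d ≥ 4 be an integer and let s > −2 with s ≠ 0. Then for every λ ≥ 0 with λ ≠ 1, τ_{d−1}·∫_{−1}^{1} (1 − t²)^{(d−3)/2}·(λ² + 1 − 2λt)^{−s/2} dt = (1 + λ²)^{−s/2}·₂F₁(s/4, (s+2)/4; d/2; 4λ²/(1 + λ²)²). -/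
open MeasureTheory Real
open scoped ENNReal

noncomputable section

/-! Writing `λ² + 1 - 2λt = (1 + λ²)(1 - u t)` with `u = 2λ / (1 + λ²)` and `|u| < 1`,
expand `(1 - u t) ^ (-s/2)` in the binomial series and integrate term by term against the
weight `(1 - t²) ^ ((d-3)/2)`. The odd moments vanish, the even ones are Beta integrals
`Γ(m + 1/2) Γ((d-1)/2) / Γ(m + d/2)`, and the duplication formula
`(s/2)_{2m} = 4^m (s/4)_m ((s+2)/4)_m` (with `(2m)! = 4^m m! (1/2)_m`) turns the surviving
series into `₂F₁(s/4, (s+2)/4; d/2; u²)`. -/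

open Set
open scoped Nat

lemma risingFact_zero (x : ℝ) : risingFact x 0 = 1 := by simp [risingFact]

lemma risingFact_succ (x : ℝ) (k : ℕ) : risingFact x (k + 1) = risingFact x k * (x + k) := by
  simp [risingFact, ascPochhammer_succ_right]

lemma risingFact_pos {x : ℝ} (hx : 0 < x) (k : ℕ) : 0 < risingFact x k :=
  ascPochhammer_pos k x hx

lemma risingFact_one (k : ℕ) : risingFact 1 k = k ! := (ascPochhammer_eval_one ℝ k).trans rfl

lemma risingFact_two_mul (c : ℝ) (m : ℕ) :
    risingFact c (2 * m) = 4 ^ m * risingFact (c / 2) m * risingFact ((c + 1) / 2) m := by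
  induction m with
  | zero => simp [risingFact_zero]
  | succ n ih =>
    rw [show 2 * (n + 1) = 2 * n + 1 + 1 by ring, risingFact_succ, risingFact_succ, ih,
      risingFact_succ, risingFact_succ]
    push_cast
    ring

lemma factorial_two_mul_eq (m : ℕ) : ((2 * m)! : ℝ) = 4 ^ m * m ! * risingFact (1 / 2) m := by
  rw [← risingFact_one, risingFact_two_mul, show ((1 : ℝ) + 1) / 2 = 1 by norm_num,
    risingFact_one]
  ring

lemma Real.Gamma_add_nat_eq_risingFact_mul {x : ℝ} (hx : 0 < x) (k : ℕ) :
    Gamma (x + k) = risingFact x k * Gamma x := by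
  induction k with
  | zero => simp [risingFact_zero]
  | succ n ih =>
    rw [Nat.cast_succ, ← add_assoc, Gamma_add_one (by positivity), ih, risingFact_succ]
    ring

lemma Ring.choose_add_natCast_sub_one (c : ℝ) (k : ℕ) :
    Ring.choose (c + k - 1) k = risingFact c k / k ! := by
  rw [Ring.choose_eq_smul, Polynomial.descPochhammer_smeval_eq_ascPochhammer,
    Polynomial.ascPochhammer_smeval_eq_eval, smul_eq_mul, risingFact, inv_mul_eq_div]
  ring_nf

lemma hasSum_risingFact_div_factorial_mul_pow (c : ℝ) {x : ℝ} (hx : |x| < 1) :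
    HasSum (fun k => risingFact c k / k ! * x ^ k) ((1 - x) ^ (-c)) := by
  have h := (Real.one_div_one_sub_rpow_hasFPowerSeriesOnBall_zero c).hasSum
    (y := x) (by simpa [enorm_eq_nnnorm, ← NNReal.coe_lt_coe] using hx)
  simpa [FormalMultilinearSeries.ofScalars_apply_eq, Ring.choose_add_natCast_sub_one, mul_comm,
    Real.rpow_neg (by linarith [le_abs_self x] : (0 : ℝ) ≤ 1 - x)] using h

lemma summable_abs_risingFact_div_factorial_mul_pow (c : ℝ) {u : ℝ} (hu0 : 0 ≤ u)
    (hu1 : u < 1) :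
    Summable fun k => |risingFact c k / k !| * u ^ k := by
  lift u to NNReal using hu0
  have h := (Real.one_div_one_sub_rpow_hasFPowerSeriesOnBall_zero c).r_le
  have := FormalMultilinearSeries.summable_norm_mul_pow _
    (lt_of_lt_of_le (ENNReal.coe_lt_one_iff.mpr (mod_cast hu1)) h)
  simpa [FormalMultilinearSeries.ofScalars_norm, Ring.choose_add_natCast_sub_one, abs_div]
    using this

lemma Real.Gamma_mul_Gamma_eq_mul_integral {u v : ℝ} (hu : 0 < u) (hv : 0 < v) :
    Gamma u * Gamma v = Gamma (u + v) * ∫ x in (0 : ℝ)..1, x ^ (u - 1) * (1 - x) ^ (v - 1) := by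
  have h := Complex.Gamma_mul_Gamma_eq_betaIntegral (s := u) (t := v)
    (by simpa using hu) (by simpa using hv)
  have hint : Complex.betaIntegral u v
      = ((∫ x in (0 : ℝ)..1, x ^ (u - 1) * (1 - x) ^ (v - 1) : ℝ) : ℂ) := by
    rw [Complex.betaIntegral, ← intervalIntegral.integral_ofReal]
    refine intervalIntegral.integral_congr fun x hx => ?_
    rw [uIcc_of_le zero_le_one] at hx
    push_cast
    rw [Complex.ofReal_cpow hx.1, Complex.ofReal_cpow (sub_nonneg.mpr hx.2)]
    push_cast
    rfl
  rw [hint, ← Complex.ofReal_add, Complex.Gamma_ofReal, Complex.Gamma_ofReal,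
    Complex.Gamma_ofReal] at h
  exact_mod_cast h

lemma intervalIntegral.integral_neg_symm_eq_zero_of_odd {f : ℝ → ℝ} (a : ℝ)
    (hf : ∀ t, f (-t) = -f t) : ∫ t in -a..a, f t = 0 := by
  have h := intervalIntegral.integral_comp_neg (a := -a) (b := a) f
  simp only [hf, intervalIntegral.integral_neg, neg_neg] at h
  linarith

lemma intervalIntegral.integral_neg_symm_eq_two_mul_of_even {f : ℝ → ℝ} (a : ℝ)
    (hf : ∀ t, f (-t) = f t) (hint : IntervalIntegrable f volume (-a) a) :
    ∫ t in -a..a, f t = 2 * ∫ t in (0 : ℝ)..a, f t := by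
  have h0 : (0 : ℝ) ∈ uIcc (-a) a := by
    rcases le_total 0 a with ha | ha
    · exact mem_uIcc_of_le (by linarith) ha
    · exact mem_uIcc_of_ge ha (by linarith)
  have hneg : ∫ t in -a..0, f t = ∫ t in (0 : ℝ)..a, f t := by
    simpa [hf] using (intervalIntegral.integral_comp_neg (a := 0) (b := a) f).symm
  rw [← intervalIntegral.integral_add_adjacent_intervals
    (hint.mono_set (uIcc_subset_uIcc left_mem_uIcc h0))
    (hint.mono_set (uIcc_subset_uIcc h0 right_mem_uIcc)), hneg]
  ring

lemma image_sq_Ioo_zero_one : (fun t : ℝ => t ^ 2) '' Ioo 0 1 = Ioo 0 1 := by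
  ext x
  constructor
  · rintro ⟨t, ⟨ht0, ht1⟩, rfl⟩
    exact ⟨by positivity, by nlinarith⟩
  · rintro ⟨hx0, hx1⟩
    refine ⟨√x, ⟨Real.sqrt_pos.mpr hx0, ?_⟩, Real.sq_sqrt hx0.le⟩
    rwa [Real.sqrt_lt' one_pos, one_pow]

lemma integral_rpow_mul_one_sub_sq_rpow (p α : ℝ) :
    ∫ t in (0 : ℝ)..1, t ^ p * (1 - t ^ 2) ^ α
      = (∫ x in (0 : ℝ)..1, x ^ ((p - 1) / 2) * (1 - x) ^ α) / 2 := by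
  simp only [intervalIntegral.integral_of_le zero_le_one, integral_Ioc_eq_integral_Ioo]
  have hsub := integral_image_eq_integral_abs_deriv_smul
    (measurableSet_Ioo (a := (0 : ℝ)) (b := 1)) (fun t _ => (hasDerivAt_pow 2 t).hasDerivWithinAt)
    ((pow_left_strictMonoOn₀ two_ne_zero).injOn.mono fun t ht => le_of_lt ht.1)
    (fun x : ℝ => x ^ ((p - 1) / 2) * (1 - x) ^ α)
  rw [image_sq_Ioo_zero_one] at hsub
  rw [eq_div_iff two_ne_zero, hsub, ← integral_mul_const]
  refine setIntegral_congr_fun measurableSet_Ioo fun t ⟨ht0, _⟩ => ?_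
  have hpow : (t ^ 2) ^ ((p - 1) / 2) * t = t ^ p := by
    rw [← Real.rpow_natCast, ← Real.rpow_mul ht0.le, ← Real.rpow_add_one ht0.ne']
    congr 1
    push_cast
    ring
  rw [smul_eq_mul, abs_of_pos (by positivity), ← hpow]
  ring

lemma integral_pow_two_mul_mul_one_sub_sq_rpow {α : ℝ} (hα : 0 ≤ α) (m : ℕ) :
    ∫ t in (-1 : ℝ)..1, t ^ (2 * m) * (1 - t ^ 2) ^ α
      = Gamma (m + 1 / 2) * Gamma (α + 1) / Gamma (m + 1 / 2 + (α + 1)) := by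
  have hcont : Continuous fun t : ℝ => t ^ (2 * m) * (1 - t ^ 2) ^ α := by
    fun_prop (disch := exact hα)
  rw [intervalIntegral.integral_neg_symm_eq_two_mul_of_even 1
    (fun t => by simp [Even.neg_pow ⟨m, two_mul m⟩]) (hcont.intervalIntegrable _ _)]
  have hrpow : ∫ t in (0 : ℝ)..1, t ^ (2 * m) * (1 - t ^ 2) ^ α
      = ∫ t in (0 : ℝ)..1, t ^ ((2 * m : ℕ) : ℝ) * (1 - t ^ 2) ^ α := by
    simp only [Real.rpow_natCast]
  rw [hrpow, integral_rpow_mul_one_sub_sq_rpow,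
    eq_div_iff (Gamma_pos_of_pos (by positivity)).ne',
    Real.Gamma_mul_Gamma_eq_mul_integral (by positivity) (by linarith)]
  push_cast
  ring_nf

lemma integral_pow_two_mul_add_one_mul_one_sub_sq_rpow (α : ℝ) (m : ℕ) :
    ∫ t in (-1 : ℝ)..1, t ^ (2 * m + 1) * (1 - t ^ 2) ^ α = 0 :=
  intervalIntegral.integral_neg_symm_eq_zero_of_odd 1 fun t => by
    simp [Odd.neg_pow ⟨m, rfl⟩]

lemma abs_pow_mul_one_sub_sq_rpow_le_one {α t : ℝ} (hα : 0 ≤ α) (ht : |t| ≤ 1) (k : ℕ) :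
    |t ^ k * (1 - t ^ 2) ^ α| ≤ 1 := by
  have hsq : t ^ 2 ≤ 1 := by rwa [sq_le_one_iff_abs_le_one]
  rw [abs_mul, abs_pow, abs_of_nonneg (Real.rpow_nonneg (by linarith) α)]
  exact mul_le_one₀ (pow_le_one₀ (abs_nonneg t) ht) (Real.rpow_nonneg (by linarith) α)
    (Real.rpow_le_one (by linarith) (by nlinarith) hα)

lemma hasSum_integral_one_sub_sq_rpow_mul_one_sub_mul_rpow {α : ℝ} (hα : 0 ≤ α) (c : ℝ)
    {u : ℝ} (hu : |u| < 1) :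
    HasSum
      (fun k => risingFact c k / k ! * u ^ k * ∫ t in (-1 : ℝ)..1, t ^ k * (1 - t ^ 2) ^ α)
      (∫ t in (-1 : ℝ)..1, (1 - t ^ 2) ^ α * (1 - u * t) ^ (-c)) := by
  have habs : ∀ t ∈ uIoc (-1 : ℝ) 1, |t| ≤ 1 := fun t ht => by
    rw [uIoc_of_le (by norm_num)] at ht
    exact abs_le.mpr ⟨ht.1.le, ht.2⟩
  have h := intervalIntegral.hasSum_integral_of_dominated_convergence
    (F := fun k t => risingFact c k / k ! * u ^ k * (t ^ k * (1 - t ^ 2) ^ α))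
    (f := fun t => (1 - t ^ 2) ^ α * (1 - u * t) ^ (-c)) (μ := volume)
    (fun k _ => |risingFact c k / k !| * |u| ^ k)
    (fun k => by
      have : Continuous fun t : ℝ => t ^ k * (1 - t ^ 2) ^ α := by fun_prop (disch := exact hα)
      exact (continuous_const.mul this).aestronglyMeasurable)
    (fun k => .of_forall fun t ht => by
      rw [Real.norm_eq_abs, abs_mul, abs_mul, abs_pow]
      exact mul_le_of_le_one_right (by positivity)
        (abs_pow_mul_one_sub_sq_rpow_le_one hα (habs t ht) k))
    (.of_forall fun _ _ => summable_abs_risingFact_div_factorial_mul_pow c (abs_nonneg u) hu)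
    intervalIntegrable_const
    (.of_forall fun t ht => by
      have hut : |u * t| < 1 := by
        rw [abs_mul]
        exact (mul_le_of_le_one_right (abs_nonneg u) (habs t ht)).trans_lt hu
      have hterm : ∀ k : ℕ, (1 - t ^ 2) ^ α * (risingFact c k / k ! * (u * t) ^ k)
          = risingFact c k / k ! * u ^ k * (t ^ k * (1 - t ^ 2) ^ α) := fun k => by ring
      have h := (hasSum_risingFact_div_factorial_mul_pow c hut).mul_left ((1 - t ^ 2) ^ α)
      rw [funext hterm] at h
      exact h)
  simpa only [intervalIntegral.integral_const_mul] using h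

lemma HasSum.even_of_odd_eq_zero {M : Type*} [AddCommMonoid M] [TopologicalSpace M]
    {f : ℕ → M} {a : M} (hf : HasSum f a) (hodd : ∀ m, f (2 * m + 1) = 0) :
    HasSum (fun m => f (2 * m)) a := by
  refine ((mul_right_injective₀ two_ne_zero).hasSum_iff fun k hk => ?_).mpr hf
  obtain ⟨m, rfl | rfl⟩ := Nat.even_or_odd' k
  · exact absurd ⟨m, rfl⟩ hk
  · exact hodd m

lemma tau_mul_coeff_two_mul_mul_moment {d : ℕ} (hd : 3 ≤ d) (c x : ℝ) (m : ℕ) :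
    tau d * (risingFact c (2 * m) / (2 * m)! * x ^ (2 * m)
        * ∫ t in (-1 : ℝ)..1, t ^ (2 * m) * (1 - t ^ 2) ^ (((d : ℝ) - 3) / 2))
      = risingFact (c / 2) m * risingFact ((c + 1) / 2) m / (risingFact ((d : ℝ) / 2) m * m !)
        * (x ^ 2) ^ m := by
  have hd' : (3 : ℝ) ≤ d := by exact_mod_cast hd
  have hΓhalf : Gamma (m + 1 / 2) = risingFact (1 / 2) m * Gamma (1 / 2) := by
    rw [add_comm]
    exact Real.Gamma_add_nat_eq_risingFact_mul one_half_pos m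
  have hΓd : Gamma (m + 1 / 2 + ((d - 3) / 2 + 1)) = risingFact (d / 2) m * Gamma (d / 2) := by
    rw [← Real.Gamma_add_nat_eq_risingFact_mul (by positivity)]
    ring_nf
  have hα : ((d : ℝ) - 3) / 2 + 1 = (d - 1) / 2 := by ring
  have := Gamma_pos_of_pos (by linarith : (0 : ℝ) < (d - 1) / 2)
  have := Gamma_pos_of_pos (by positivity : (0 : ℝ) < d / 2)
  have := risingFact_pos one_half_pos m
  have := risingFact_pos (by positivity : (0 : ℝ) < d / 2) m
  rw [integral_pow_two_mul_mul_one_sub_sq_rpow (by linarith), hΓhalf, hΓd, hα,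
    risingFact_two_mul, factorial_two_mul_eq, pow_mul, tau]
  field_simp

lemma abs_two_mul_div_one_add_sq_lt_one {x : ℝ} (hx : |x| ≠ 1) : |2 * x / (1 + x ^ 2)| < 1 := by
  have hpos : 0 < (1 - |x|) ^ 2 := by
    have : 1 - |x| ≠ 0 := sub_ne_zero.mpr (Ne.symm hx)
    positivity
  rw [abs_div, abs_of_pos (by positivity : 0 < 1 + x ^ 2), div_lt_one (by positivity), abs_mul,
    abs_two, ← sq_abs x]
  nlinarith

lemma sq_add_one_sub_two_mul_mul_rpow {lam t : ℝ} (r : ℝ)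
    (ht : 0 ≤ 1 - 2 * lam / (1 + lam ^ 2) * t) :
    (lam ^ 2 + 1 - 2 * lam * t) ^ r
      = (1 + lam ^ 2) ^ r * (1 - 2 * lam / (1 + lam ^ 2) * t) ^ r := by
  rw [← Real.mul_rpow (by positivity) ht]
  congr 1
  field_simp
  ring

theorem statement19_general (d : ℕ) (hd : 4 ≤ d) (s lam : ℝ)
    (hlam0 : 0 ≤ lam) (hlam1 : lam ≠ 1) :
    tau d * ∫ t in (-1 : ℝ)..1,
        (1 - t ^ 2) ^ (((d : ℝ) - 3) / 2) * (lam ^ 2 + 1 - 2 * lam * t) ^ (-s / 2)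
      = (1 + lam ^ 2) ^ (-s / 2)
        * hyp2F1 (s / 4) ((s + 2) / 4) ((d : ℝ) / 2) (4 * lam ^ 2 / (1 + lam ^ 2) ^ 2) := by
  have hα : 0 ≤ ((d : ℝ) - 3) / 2 := by
    have : (4 : ℝ) ≤ d := by exact_mod_cast hd
    linarith
  set u := 2 * lam / (1 + lam ^ 2) with hu_def
  have hu : |u| < 1 := abs_two_mul_div_one_add_sq_lt_one (by rwa [abs_of_nonneg hlam0])
  have hkernel : ∫ t in (-1 : ℝ)..1,
        (1 - t ^ 2) ^ (((d : ℝ) - 3) / 2) * (lam ^ 2 + 1 - 2 * lam * t) ^ (-s / 2)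
      = (1 + lam ^ 2) ^ (-s / 2) * ∫ t in (-1 : ℝ)..1,
        (1 - t ^ 2) ^ (((d : ℝ) - 3) / 2) * (1 - u * t) ^ (-(s / 2)) := by
    rw [← intervalIntegral.integral_const_mul]
    refine intervalIntegral.integral_congr fun t htI => ?_
    have ht : |t| ≤ 1 := abs_le.mpr (by simpa [uIcc_of_le] using htI)
    have hut : |u * t| ≤ 1 := by
      rw [abs_mul]
      exact mul_le_one₀ hu.le (abs_nonneg t) ht
    rw [sq_add_one_sub_two_mul_mul_rpow _ (by linarith [le_abs_self (u * t)]), neg_div]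
    ring
  have hsum := ((hasSum_integral_one_sub_sq_rpow_mul_one_sub_mul_rpow hα (s / 2) hu).mul_left
    (tau d)).even_of_odd_eq_zero fun m => by
      rw [integral_pow_two_mul_add_one_mul_one_sub_sq_rpow, mul_zero, mul_zero]
  rw [hkernel, mul_left_comm, ← hsum.tsum_eq, hyp2F1]
  congr 1
  refine tsum_congr fun m => ?_
  rw [tau_mul_coeff_two_mul_mul_moment (by omega), show s / 2 / 2 = s / 4 by ring,
    show (s / 2 + 1) / 2 = (s + 2) / 4 by ring, hu_def, div_pow]
  ring

theorem statement19 (d : ℕ) (hd : 4 ≤ d) (s lam : ℝ)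
    (hs1 : -2 < s) (hs2 : s ≠ 0) (hlam0 : 0 ≤ lam) (hlam1 : lam ≠ 1) :
    tau d * ∫ t in (-1 : ℝ)..1,
        (1 - t ^ 2) ^ (((d : ℝ) - 3) / 2) * (lam ^ 2 + 1 - 2 * lam * t) ^ (-s / 2)
      = (1 + lam ^ 2) ^ (-s / 2)
        * hyp2F1 (s / 4) ((s + 2) / 4) ((d : ℝ) / 2) (4 * lam ^ 2 / (1 + lam ^ 2) ^ 2) :=
  statement19_general d hd s lam hlam0 hlam1

end
end
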